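/- Let s ≥ t ≥ p ≥ 1 be real numbers, A, B invertible n×n complex matrices and Q an n×n Hermitian positive definite matrix. Suppose there exists α with 0 < α ≤ λₙ(Q) such that α + α^(−t/s)‖A‖² + α^(−p/s)‖B‖² < λₙ(Q); let β = λₙ(Q − α^(−t/s)A*A − α^(−p/s)B*B) and assume t β^(−t/s)‖A‖² + p β^(−p/s)‖B‖² < s β. Let Ȳ be the unique Hermitian positive definite solution of Y + A*Y^(−t/s)A + B*Y^(−p/s)B = Q with αI ≤ Ȳ ≤ Q. Then Ȳ is maximal among Hermitian positive definite solutions: every Hermitian positive definite matrix Z with Z + A*Z^(−t/s)A + B*Z^(−p/s)B = Q and Ȳ ≤ Z satisfies Z = Ȳ. -/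

import Mathlib

open Matrix Filter
open scoped ComplexOrder Matrix.Norms.L2Operator

/-- Real power of a Hermitian matrix, via the spectral decomposition
(junk value `X` if `X` is not Hermitian). -/
noncomputable def hrpow {n : ℕ} (X : Matrix (Fin n) (Fin n) ℂ) (r : ℝ) :
    Matrix (Fin n) (Fin n) ℂ :=
  if hX : X.IsHermitian then
    (hX.eigenvectorUnitary : Matrix (Fin n) (Fin n) ℂ) *
      Matrix.diagonal (fun i => ((hX.eigenvalues i ^ r : ℝ) : ℂ)) *
      (hX.eigenvectorUnitary : Matrix (Fin n) (Fin n) ℂ)ᴴ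
  else X

/-- Largest eigenvalue of a Hermitian matrix (junk value `0` otherwise). -/
noncomputable def lamMax {n : ℕ} (X : Matrix (Fin n) (Fin n) ℂ) : ℝ :=
  if hX : X.IsHermitian then ⨆ i, hX.eigenvalues i else 0

/-- Smallest eigenvalue of a Hermitian matrix (junk value `0` otherwise). -/
noncomputable def lamMin {n : ℕ} (X : Matrix (Fin n) (Fin n) ℂ) : ℝ :=
  if hX : X.IsHermitian then ⨅ i, hX.eigenvalues i else 0

/-- The spectral (ℓ²-operator) norm of a complex matrix. -/
noncomputable def specNorm {n : ℕ} (A : Matrix (Fin n) (Fin n) ℂ) : ℝ :=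
  ‖Matrix.toEuclideanCLM (𝕜 := ℂ) A‖

/-- The spectral radius of a complex matrix. -/
noncomputable def specRad {n : ℕ} (A : Matrix (Fin n) (Fin n) ℂ) : ℝ :=
  (spectralRadius ℂ A).toReal

/-- The Loewner order: `lle X Y` iff `Y - X` is positive semidefinite. -/
def lle {n : ℕ} (X Y : Matrix (Fin n) (Fin n) ℂ) : Prop := (Y - X).PosSemidef



lemma scalar_lip {r c : ℝ} (hr : 0 ≤ r) (hc : 0 < c) {x y : ℝ} (hx : c ≤ x) (hy : c ≤ y) :
    |x ^ (-r) - y ^ (-r)| ≤ r * c ^ (-r - 1) * |x - y| := by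
  wlog hxy : x ≤ y generalizing x y
  · rw [abs_sub_comm, abs_sub_comm x y]; exact this hy hx (le_of_not_ge hxy)
  rcases eq_or_lt_of_le hxy with h | h
  · simp [h]
  obtain ⟨z, hz, hslope⟩ := exists_hasDerivAt_eq_slope (fun w => w ^ (-r))
      (fun w => (-r) * w ^ (-r - 1)) h
      (fun w hw => by
        have hw0 : w ≠ 0 := by
          have : (0:ℝ) < w := lt_of_lt_of_le hc (hx.trans hw.1)
          positivity
        exact (Real.hasDerivAt_rpow_const (Or.inl hw0)).continuousAt.continuousWithinAt)
      (fun w hw => Real.hasDerivAt_rpow_const (Or.inl (by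
        have : (0:ℝ) < w := lt_of_lt_of_le hc (hx.trans hw.1.le)
        positivity)))
  have hzc : c ≤ z := hx.trans hz.1.le
  have hz0 : (0:ℝ) < z := lt_of_lt_of_le hc hzc
  have : x ^ (-r) - y ^ (-r) = r * z ^ (-r - 1) * (y - x) := by
    have hne : y - x ≠ 0 := by linarith
    field_simp at hslope
    nlinarith [hslope]
  rw [this, abs_sub_comm x y]
  rw [abs_mul, abs_mul]
  have h1 : z ^ (-r - 1) ≤ c ^ (-r - 1) :=
    Real.rpow_le_rpow_of_nonpos hc hzc (by linarith)
  have h2 : (0:ℝ) ≤ z ^ (-r-1) := (Real.rpow_pos_of_pos hz0 _).le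
  have h3 : (0:ℝ) ≤ c ^ (-r-1) := (Real.rpow_pos_of_pos hc _).le
  rw [abs_of_nonneg hr, abs_of_nonneg h2]
  exact mul_le_mul_of_nonneg_right (mul_le_mul_of_nonneg_left h1 hr) (abs_nonneg _)

noncomputable def fnorm {n : ℕ} (M : Matrix (Fin n) (Fin n) ℂ) : ℝ :=
  Real.sqrt (∑ i, ∑ j, ‖M i j‖ ^ 2)

lemma fnorm_nonneg {n : ℕ} (M : Matrix (Fin n) (Fin n) ℂ) : 0 ≤ fnorm M := Real.sqrt_nonneg _

lemma fnorm_sq {n : ℕ} (M : Matrix (Fin n) (Fin n) ℂ) :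
    fnorm M ^ 2 = ∑ i, ∑ j, ‖M i j‖ ^ 2 := by
  rw [fnorm, Real.sq_sqrt]
  positivity

lemma fnorm_eq_zero {n : ℕ} {M : Matrix (Fin n) (Fin n) ℂ} (h : fnorm M = 0) : M = 0 := by
  have h2 : (∑ i, ∑ j, ‖M i j‖ ^ 2) = 0 := by
    have := fnorm_sq M
    rw [h] at this; linarith
  ext i j
  have h3 : ‖M i j‖ ^ 2 ≤ ∑ j', ‖M i j'‖ ^ 2 :=
    Finset.single_le_sum (fun k _ => sq_nonneg ‖M i k‖) (Finset.mem_univ j)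
  have h4 : (∑ j', ‖M i j'‖ ^ 2) ≤ ∑ i', ∑ j', ‖M i' j'‖ ^ 2 :=
    Finset.single_le_sum (f := fun i' => ∑ j', ‖M i' j'‖ ^ 2)
      (fun k _ => Finset.sum_nonneg fun j' _ => sq_nonneg _) (Finset.mem_univ i)
  have h5 : ‖M i j‖ ^ 2 ≤ 0 := by rw [h2] at h4; linarith
  have h6 : ‖M i j‖ = 0 := by nlinarith [norm_nonneg (M i j), sq_nonneg ‖M i j‖]
  simpa using h6

lemma fnorm_mono {n : ℕ} {c : ℝ} (hc : 0 ≤ c) {W M : Matrix (Fin n) (Fin n) ℂ}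
    (h : ∀ i j, ‖W i j‖ ≤ c * ‖M i j‖) : fnorm W ≤ c * fnorm M := by
  have hsq : fnorm W ^ 2 ≤ (c * fnorm M) ^ 2 := by
    rw [fnorm_sq, mul_pow, fnorm_sq, Finset.mul_sum]
    refine Finset.sum_le_sum fun i _ => ?_
    rw [Finset.mul_sum]
    refine Finset.sum_le_sum fun j _ => ?_
    calc ‖W i j‖ ^ 2 ≤ (c * ‖M i j‖) ^ 2 := by
          apply pow_le_pow_left₀ (norm_nonneg _) (h i j)
      _ = c ^ 2 * ‖M i j‖ ^ 2 := by ring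
  have h1 := fnorm_nonneg W
  have h2 : 0 ≤ c * fnorm M := mul_nonneg hc (fnorm_nonneg M)
  nlinarith

lemma fnorm_sq_eq_trace {n : ℕ} (M : Matrix (Fin n) (Fin n) ℂ) :
    ((fnorm M ^ 2 : ℝ) : ℂ) = Matrix.trace (Mᴴ * M) := by
  rw [fnorm_sq, Matrix.trace]
  push_cast
  rw [Finset.sum_comm]
  refine Finset.sum_congr rfl fun j _ => ?_
  rw [Matrix.diag, Matrix.mul_apply]
  refine Finset.sum_congr rfl fun i _ => ?_
  rw [Matrix.conjTranspose_apply, RCLike.star_def, RCLike.conj_mul]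
  norm_cast

noncomputable def toE {n : ℕ} (M : Matrix (Fin n) (Fin n) ℂ) : EuclideanSpace ℂ (Fin n × Fin n) :=
  (WithLp.equiv 2 _).symm (fun ij => M ij.1 ij.2)

lemma fnorm_eq_toE {n : ℕ} (M : Matrix (Fin n) (Fin n) ℂ) : fnorm M = ‖toE M‖ := by
  rw [EuclideanSpace.norm_eq, fnorm]
  congr 1
  rw [Fintype.sum_prod_type]
  rfl

lemma fnorm_add_le {n : ℕ} (X Y : Matrix (Fin n) (Fin n) ℂ) :
    fnorm (X + Y) ≤ fnorm X + fnorm Y := by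
  rw [fnorm_eq_toE, fnorm_eq_toE, fnorm_eq_toE]
  have : toE (X + Y) = toE X + toE Y := rfl
  rw [this]
  exact norm_add_le _ _

lemma fnorm_sub_comm {n : ℕ} (X Y : Matrix (Fin n) (Fin n) ℂ) :
    fnorm (X - Y) = fnorm (Y - X) := by
  unfold fnorm
  congr 1
  refine Finset.sum_congr rfl fun i _ => Finset.sum_congr rfl fun j _ => ?_
  rw [Matrix.sub_apply, Matrix.sub_apply, norm_sub_rev]

lemma fnorm_eq_of_sq_eq {n : ℕ} {X Y : Matrix (Fin n) (Fin n) ℂ}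
    (h : fnorm X ^ 2 = fnorm Y ^ 2) : fnorm X = fnorm Y := by
  nlinarith [fnorm_nonneg X, fnorm_nonneg Y]

lemma fnorm_conj_unitary {n : ℕ} {U V : Matrix (Fin n) (Fin n) ℂ}
    (hU : Uᴴ * U = 1) (hV : V * Vᴴ = 1) (M : Matrix (Fin n) (Fin n) ℂ) :
    fnorm (U * M * V) = fnorm M := by
  apply fnorm_eq_of_sq_eq
  have key : ((fnorm (U * M * V) ^ 2 : ℝ) : ℂ) = ((fnorm M ^ 2 : ℝ) : ℂ) := by
    rw [fnorm_sq_eq_trace, fnorm_sq_eq_trace]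
    have : (U * M * V)ᴴ * (U * M * V) = Vᴴ * (Mᴴ * M) * V := by
      simp only [Matrix.conjTranspose_mul, Matrix.mul_assoc]
      rw [← Matrix.mul_assoc Uᴴ U, hU, Matrix.one_mul]
    rw [this, Matrix.trace_mul_cycle, ← Matrix.mul_assoc, hV, Matrix.one_mul]
  exact_mod_cast key

lemma fnorm_conjTranspose {n : ℕ} (M : Matrix (Fin n) (Fin n) ℂ) : fnorm Mᴴ = fnorm M := by
  unfold fnorm
  congr 1
  rw [Finset.sum_comm]
  refine Finset.sum_congr rfl fun i _ => Finset.sum_congr rfl fun j _ => ?_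
  rw [Matrix.conjTranspose_apply, norm_star]

lemma fnorm_mul_le_left {n : ℕ} (A M : Matrix (Fin n) (Fin n) ℂ) :
    fnorm (A * M) ≤ specNorm A * fnorm M := by
  have hA : (0:ℝ) ≤ specNorm A := norm_nonneg _
  have hsq : fnorm (A * M) ^ 2 ≤ (specNorm A * fnorm M) ^ 2 := by
    rw [fnorm_sq, mul_pow, fnorm_sq]
    calc ∑ i, ∑ j, ‖(A * M) i j‖ ^ 2 = ∑ j, ∑ i, ‖(A * M) i j‖ ^ 2 :=
          Finset.sum_comm
      _ ≤ ∑ j, specNorm A ^ 2 * ∑ i, ‖M i j‖ ^ 2 := ?_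
      _ = specNorm A ^ 2 * ∑ i, ∑ j, ‖M i j‖ ^ 2 := by
          rw [← Finset.mul_sum, Finset.sum_comm]
    refine Finset.sum_le_sum fun j _ => ?_
    set x : EuclideanSpace ℂ (Fin n) := (WithLp.equiv 2 _).symm (fun i => M i j) with hx
    have h1 : ∑ i, ‖(A * M) i j‖ ^ 2
        = ‖(EuclideanSpace.equiv (Fin n) ℂ).symm (A *ᵥ x)‖ ^ 2 := by
      rw [EuclideanSpace.norm_eq, Real.sq_sqrt (by positivity)]
      rfl
    have h2 : ∑ i, ‖M i j‖ ^ 2 = ‖x‖ ^ 2 := by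
      rw [EuclideanSpace.norm_eq, Real.sq_sqrt (by positivity)]
      rfl
    rw [h1, h2]
    have := Matrix.l2_opNorm_mulVec A x
    have hnn : (0:ℝ) ≤ ‖(EuclideanSpace.equiv (Fin n) ℂ).symm (A *ᵥ x)‖ := norm_nonneg _
    calc ‖(EuclideanSpace.equiv (Fin n) ℂ).symm (A *ᵥ x)‖ ^ 2 ≤ (‖A‖ * ‖x‖)^2 := by
          apply pow_le_pow_left₀ hnn this
      _ = specNorm A ^ 2 * ‖x‖ ^ 2 := by rw [mul_pow]; rfl
  nlinarith [fnorm_nonneg (A * M), mul_nonneg hA (fnorm_nonneg M)]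

lemma specNorm_conjTranspose {n : ℕ} (A : Matrix (Fin n) (Fin n) ℂ) :
    specNorm Aᴴ = specNorm A := Matrix.l2_opNorm_conjTranspose A

lemma fnorm_mul_le_right {n : ℕ} (A M : Matrix (Fin n) (Fin n) ℂ) :
    fnorm (M * A) ≤ specNorm A * fnorm M := by
  rw [← fnorm_conjTranspose (M * A), Matrix.conjTranspose_mul, ← fnorm_conjTranspose M,
    ← specNorm_conjTranspose A]
  exact fnorm_mul_le_left Aᴴ Mᴴ

section order
variable {n : ℕ}

lemma rsmul (c : ℝ) (M : Matrix (Fin n) (Fin n) ℂ) : c • M = ((c : ℂ)) • M := by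
  ext i j
  simp [Matrix.smul_apply, Complex.real_smul]

lemma star_mul_unitary {X : Matrix (Fin n) (Fin n) ℂ} (hX : X.IsHermitian) :
    (hX.eigenvectorUnitary : Matrix (Fin n) (Fin n) ℂ)ᴴ *
      (hX.eigenvectorUnitary : Matrix (Fin n) (Fin n) ℂ) = 1 := by
  rw [← Matrix.star_eq_conjTranspose]
  exact (Unitary.mem_iff.mp hX.eigenvectorUnitary.2).1

lemma unitary_mul_star {X : Matrix (Fin n) (Fin n) ℂ} (hX : X.IsHermitian) :
    (hX.eigenvectorUnitary : Matrix (Fin n) (Fin n) ℂ) *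
      (hX.eigenvectorUnitary : Matrix (Fin n) (Fin n) ℂ)ᴴ = 1 := by
  rw [← Matrix.star_eq_conjTranspose]
  exact (Unitary.mem_iff.mp hX.eigenvectorUnitary.2).2

lemma conj_smul_one {X : Matrix (Fin n) (Fin n) ℂ} (hX : X.IsHermitian) (c : ℝ) :
    (hX.eigenvectorUnitary : Matrix (Fin n) (Fin n) ℂ) * (c • (1 : Matrix (Fin n) (Fin n) ℂ)) *
      (hX.eigenvectorUnitary : Matrix (Fin n) (Fin n) ℂ)ᴴ = c • 1 := by
  rw [Matrix.mul_smul, Matrix.mul_one, Matrix.smul_mul, unitary_mul_star hX]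

/-- smul-one as diagonal -/
lemma smul_one_diag (c : ℝ) :
    c • (1 : Matrix (Fin n) (Fin n) ℂ) = Matrix.diagonal (fun _ => (c : ℂ)) := by
  ext i j
  by_cases h : i = j <;>
    simp [h, Matrix.smul_apply, Matrix.one_apply, Matrix.diagonal_apply, Complex.real_smul]

lemma spectral' {X : Matrix (Fin n) (Fin n) ℂ} (hX : X.IsHermitian) :
    X = (hX.eigenvectorUnitary : Matrix (Fin n) (Fin n) ℂ) *
      Matrix.diagonal (fun i => ((hX.eigenvalues i : ℝ) : ℂ)) *
      (hX.eigenvectorUnitary : Matrix (Fin n) (Fin n) ℂ)ᴴ := by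
  conv_lhs => rw [hX.spectral_theorem]
  rw [Unitary.conjStarAlgAut_apply]
  rfl

lemma conj_diag {X : Matrix (Fin n) (Fin n) ℂ} (hX : X.IsHermitian) :
    (hX.eigenvectorUnitary : Matrix (Fin n) (Fin n) ℂ)ᴴ * X *
      (hX.eigenvectorUnitary : Matrix (Fin n) (Fin n) ℂ)
      = Matrix.diagonal (fun i => ((hX.eigenvalues i : ℝ) : ℂ)) := by
  rw [← Matrix.star_eq_conjTranspose]
  have h := hX.conjStarAlgAut_star_eigenvectorUnitary
  rw [Unitary.conjStarAlgAut_star_apply] at h; refine h.trans ?_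
  rfl

lemma diag_sub (d e : Fin n → ℂ) :
    Matrix.diagonal d - Matrix.diagonal e = Matrix.diagonal (fun i => d i - e i) :=
  (Matrix.diagonal_sub d e).symm ▸ rfl

/-- X Hermitian with eigenvalues ≥ c implies c•1 ≤ X -/
lemma lle_of_eig_ge {X : Matrix (Fin n) (Fin n) ℂ} (hX : X.IsHermitian) {c : ℝ}
    (h : ∀ i, c ≤ hX.eigenvalues i) : lle (c • 1) X := by
  unfold lle
  have hrw : X - c • 1 = (hX.eigenvectorUnitary : Matrix (Fin n) (Fin n) ℂ) *
      Matrix.diagonal (fun i => ((hX.eigenvalues i - c : ℝ) : ℂ)) *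
      (hX.eigenvectorUnitary : Matrix (Fin n) (Fin n) ℂ)ᴴ := by
    conv_lhs => rw [spectral' hX, ← conj_smul_one hX c]
    rw [← Matrix.sub_mul, ← Matrix.mul_sub, smul_one_diag, Matrix.diagonal_sub]
    congr 2
    funext i
    push_cast
    rfl
  rw [hrw, ← Matrix.star_eq_conjTranspose]
  apply Matrix.PosSemidef.mul_mul_conjTranspose_same
  refine Matrix.posSemidef_diagonal_iff.mpr fun i => ?_
  rw [Complex.zero_le_real]
  linarith [h i]

/-- c•1 ≤ X implies eigenvalues ≥ c -/
lemma eig_ge_of_lle {X : Matrix (Fin n) (Fin n) ℂ} (hX : X.IsHermitian) {c : ℝ}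
    (h : lle (c • 1) X) (i : Fin n) : c ≤ hX.eigenvalues i := by
  unfold lle at h
  have hconj := h.conjTranspose_mul_mul_same (hX.eigenvectorUnitary : Matrix (Fin n) (Fin n) ℂ)
  have hrw : (hX.eigenvectorUnitary : Matrix (Fin n) (Fin n) ℂ)ᴴ * (X - c • 1) *
      (hX.eigenvectorUnitary : Matrix (Fin n) (Fin n) ℂ)
      = Matrix.diagonal (fun i => ((hX.eigenvalues i - c : ℝ) : ℂ)) := by
    rw [Matrix.mul_sub, Matrix.sub_mul, conj_diag hX]
    rw [Matrix.mul_smul, Matrix.mul_one, Matrix.smul_mul, star_mul_unitary hX]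
    rw [smul_one_diag, Matrix.diagonal_sub]
    congr 1
    funext i
    push_cast
    rfl
  rw [hrw] at hconj
  have := Matrix.posSemidef_diagonal_iff.mp hconj i
  rw [Complex.zero_le_real] at this
  linarith

lemma lamMin_lle {X : Matrix (Fin n) (Fin n) ℂ} (hX : X.IsHermitian) (hn : 0 < n) :
    lle ((lamMin X) • 1) X := by
  apply lle_of_eig_ge hX
  intro i
  rw [lamMin, dif_pos hX]
  exact ciInf_le (Finite.bddBelow_range _) i

lemma lamMin_ge_of_lle {X : Matrix (Fin n) (Fin n) ℂ} (hX : X.IsHermitian) (hn : 0 < n) {c : ℝ}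
    (h : lle (c • 1) X) : c ≤ lamMin X := by
  rw [lamMin, dif_pos hX]
  have : Nonempty (Fin n) := ⟨⟨0, hn⟩⟩
  exact le_ciInf (eig_ge_of_lle hX h)

lemma lle_trans {X Y Z : Matrix (Fin n) (Fin n) ℂ} (h1 : lle X Y) (h2 : lle Y Z) : lle X Z := by
  unfold lle at *
  have := h1.add h2
  simpa using this

lemma lle_conj {M N : Matrix (Fin n) (Fin n) ℂ} (h : lle M N) (A : Matrix (Fin n) (Fin n) ℂ) :
    lle (Aᴴ * M * A) (Aᴴ * N * A) := by
  unfold lle at *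
  have := h.conjTranspose_mul_mul_same A
  have hrw : Aᴴ * (N - M) * A = Aᴴ * N * A - Aᴴ * M * A := by
    rw [Matrix.mul_sub, Matrix.sub_mul]
  rwa [hrw] at this

end order

section more
variable {n : ℕ}

lemma dot_star_self (v : Fin n → ℂ) :
    dotProduct (star v) v = ((∑ i, ‖v i‖ ^ 2 : ℝ) : ℂ) := by
  rw [dotProduct]
  push_cast
  refine Finset.sum_congr rfl fun i _ => ?_
  rw [Pi.star_apply, RCLike.star_def, RCLike.conj_mul]
  norm_cast

lemma sum_sq_eq_norm (v : Fin n → ℂ) :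
    (∑ i, ‖v i‖ ^ 2 : ℝ) = ‖(WithLp.equiv 2 (Fin n → ℂ)).symm v‖ ^ 2 := by
  rw [EuclideanSpace.norm_eq, Real.sq_sqrt (by positivity)]
  rfl

lemma lle_AHA (A : Matrix (Fin n) (Fin n) ℂ) :
    lle (Aᴴ * A) ((specNorm A ^ 2) • 1) := by
  unfold lle
  refine posSemidef_iff_dotProduct_mulVec.mpr ⟨?_, ?_⟩
  · rw [smul_one_diag]
    exact ((Matrix.isHermitian_diagonal_of_self_adjoint _
      (by funext i; simp [Complex.conj_ofReal])).sub
      (Matrix.posSemidef_conjTranspose_mul_self A).1)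
  · intro x
    rw [Matrix.sub_mulVec, dotProduct_sub]
    have h1 : (specNorm A ^ 2 • (1 : Matrix (Fin n) (Fin n) ℂ)) *ᵥ x = specNorm A ^ 2 • x := by
      rw [rsmul, smul_mulVec, Matrix.one_mulVec]
      ext i
      simp [Complex.real_smul]
    have h2 : dotProduct (star x) ((Aᴴ * A) *ᵥ x)
        = dotProduct (star (A *ᵥ x)) (A *ᵥ x) := by
      rw [← Matrix.mulVec_mulVec, Matrix.dotProduct_mulVec, ← Matrix.star_mulVec]
    rw [h1, h2, dotProduct_smul, dot_star_self, dot_star_self]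
    have hb : (∑ i, ‖(A *ᵥ x) i‖ ^ 2 : ℝ) ≤ specNorm A ^ 2 * ∑ i, ‖x i‖ ^ 2 := by
      rw [sum_sq_eq_norm, sum_sq_eq_norm]
      have := Matrix.l2_opNorm_mulVec A ((WithLp.equiv 2 (Fin n → ℂ)).symm x)
      have hrw : (A *ᵥ (WithLp.equiv 2 (Fin n → ℂ)).symm x) = A *ᵥ x := rfl
      have hnn : (0:ℝ) ≤ ‖(EuclideanSpace.equiv (Fin n) ℂ).symm (A *ᵥ x)‖ := norm_nonneg _
      calc ‖(WithLp.equiv 2 (Fin n → ℂ)).symm (A *ᵥ x)‖ ^ 2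
          ≤ (‖A‖ * ‖(WithLp.equiv 2 (Fin n → ℂ)).symm x‖) ^ 2 := by
            apply pow_le_pow_left₀ hnn
            exact this
        _ = specNorm A ^ 2 * ‖(WithLp.equiv 2 (Fin n → ℂ)).symm x‖ ^ 2 := by
            rw [mul_pow]; rfl
    have hrw2 : (specNorm A ^ 2 : ℝ) • ((∑ i, ‖x i‖ ^ 2 : ℝ) : ℂ)
        - ((∑ i, ‖(A *ᵥ x) i‖ ^ 2 : ℝ) : ℂ)
        = ((specNorm A ^ 2 * ∑ i, ‖x i‖ ^ 2 - ∑ i, ‖(A *ᵥ x) i‖ ^ 2 : ℝ) : ℂ) := by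
      rw [Complex.real_smul]
      push_cast
      ring
    rw [hrw2, Complex.zero_le_real]
    linarith

lemma psd_rsmul {M : Matrix (Fin n) (Fin n) ℂ} (hM : M.PosSemidef) {c : ℝ} (hc : 0 ≤ c) :
    (c • M).PosSemidef := by
  rw [rsmul]
  refine posSemidef_iff_dotProduct_mulVec.mpr ⟨?_, ?_⟩
  · rw [Matrix.IsHermitian, Matrix.conjTranspose_smul, hM.1.eq, Complex.star_def,
      Complex.conj_ofReal]
  · intro x
    rw [smul_mulVec, dotProduct_smul, smul_eq_mul]
    exact mul_nonneg (Complex.zero_le_real.mpr hc) (hM.dotProduct_mulVec_nonneg x)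

lemma lle_add {X X' Y Y' : Matrix (Fin n) (Fin n) ℂ} (h1 : lle X X') (h2 : lle Y Y') :
    lle (X + Y) (X' + Y') := by
  unfold lle at *
  have := h1.add h2
  have hrw : X' - X + (Y' - Y) = X' + Y' - (X + Y) := by abel
  rwa [hrw] at this

end more


section hrpowlem
variable {n : ℕ}

lemma herm_rsmul {M : Matrix (Fin n) (Fin n) ℂ} (hM : M.IsHermitian) (c : ℝ) :
    (c • M).IsHermitian := by
  rw [rsmul, Matrix.IsHermitian, Matrix.conjTranspose_smul, hM.eq, Complex.star_def,
    Complex.conj_ofReal]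

lemma hrpow_eq {X : Matrix (Fin n) (Fin n) ℂ} (hX : X.IsHermitian) (r : ℝ) :
    hrpow X r = (hX.eigenvectorUnitary : Matrix (Fin n) (Fin n) ℂ) *
      Matrix.diagonal (fun i => ((hX.eigenvalues i ^ r : ℝ) : ℂ)) *
      (hX.eigenvectorUnitary : Matrix (Fin n) (Fin n) ℂ)ᴴ := dif_pos hX

lemma hrpow_le {X : Matrix (Fin n) (Fin n) ℂ} (hX : X.IsHermitian) {c r : ℝ}
    (hc : 0 < c) (hr : 0 ≤ r) (heig : ∀ i, c ≤ hX.eigenvalues i) :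
    lle (hrpow X (-r)) ((c ^ (-r) : ℝ) • 1) := by
  unfold lle
  have hrw : (c ^ (-r) : ℝ) • (1 : Matrix (Fin n) (Fin n) ℂ) - hrpow X (-r)
      = (hX.eigenvectorUnitary : Matrix (Fin n) (Fin n) ℂ) *
        Matrix.diagonal (fun i => ((c ^ (-r) - hX.eigenvalues i ^ (-r) : ℝ) : ℂ)) *
        (hX.eigenvectorUnitary : Matrix (Fin n) (Fin n) ℂ)ᴴ := by
    rw [hrpow_eq hX, ← conj_smul_one hX (c ^ (-r)), ← Matrix.sub_mul, ← Matrix.mul_sub,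
      smul_one_diag, Matrix.diagonal_sub]
    congr 2
    funext i
    push_cast
    rfl
  rw [hrw, ← Matrix.star_eq_conjTranspose]
  apply Matrix.PosSemidef.mul_mul_conjTranspose_same
  refine Matrix.posSemidef_diagonal_iff.mpr fun i => ?_
  rw [Complex.zero_le_real, sub_nonneg]
  exact Real.rpow_le_rpow_of_nonpos hc (heig i) (neg_nonpos.mpr hr)

lemma fnorm_conj_le (A M : Matrix (Fin n) (Fin n) ℂ) :
    fnorm (Aᴴ * M * A) ≤ specNorm A ^ 2 * fnorm M := by
  calc fnorm (Aᴴ * M * A) ≤ specNorm A * fnorm (Aᴴ * M) := fnorm_mul_le_right A (Aᴴ * M)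
    _ ≤ specNorm A * (specNorm Aᴴ * fnorm M) := by
        have := fnorm_mul_le_left Aᴴ M
        have hA : (0:ℝ) ≤ specNorm A := norm_nonneg _
        exact mul_le_mul_of_nonneg_left this hA
    _ = specNorm A ^ 2 * fnorm M := by rw [specNorm_conjTranspose]; ring

lemma lip_fnorm {X Y : Matrix (Fin n) (Fin n) ℂ} (hX : X.IsHermitian) (hY : Y.IsHermitian)
    {r c : ℝ} (hr : 0 ≤ r) (hc : 0 < c)
    (hXe : ∀ i, c ≤ hX.eigenvalues i) (hYe : ∀ i, c ≤ hY.eigenvalues i) :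
    fnorm (hrpow X (-r) - hrpow Y (-r)) ≤ (r * c ^ (-r - 1)) * fnorm (X - Y) := by
  set U := (hX.eigenvectorUnitary : Matrix (Fin n) (Fin n) ℂ) with hUdef
  set V := (hY.eigenvectorUnitary : Matrix (Fin n) (Fin n) ℂ) with hVdef
  have hU1 : Uᴴ * U = 1 := star_mul_unitary hX
  have hU2 : U * Uᴴ = 1 := unitary_mul_star hX
  have hV1 : Vᴴ * V = 1 := star_mul_unitary hY
  have hV2 : V * Vᴴ = 1 := unitary_mul_star hY
  set K := Uᴴ * V with hKdef
  have hconjU : ∀ D : Matrix (Fin n) (Fin n) ℂ, Uᴴ * (U * D * Uᴴ) * V = D * K := by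
    intro D
    calc Uᴴ * (U * D * Uᴴ) * V = (Uᴴ * U) * D * (Uᴴ * V) := by
          simp only [Matrix.mul_assoc]
      _ = D * K := by rw [hU1, Matrix.one_mul]
  have hconjV : ∀ D : Matrix (Fin n) (Fin n) ℂ, Uᴴ * (V * D * Vᴴ) * V = K * D := by
    intro D
    calc Uᴴ * (V * D * Vᴴ) * V = (Uᴴ * V) * D * (Vᴴ * V) := by
          simp only [Matrix.mul_assoc]
      _ = K * D := by rw [hV1, Matrix.mul_one]
  set W := Uᴴ * (hrpow X (-r) - hrpow Y (-r)) * V with hWdef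
  set M := Uᴴ * (X - Y) * V with hMdef
  have hWentry : ∀ i j, W i j
      = ((hX.eigenvalues i ^ (-r) - hY.eigenvalues j ^ (-r) : ℝ) : ℂ) * K i j := by
    intro i j
    have : W = Matrix.diagonal (fun i => ((hX.eigenvalues i ^ (-r) : ℝ) : ℂ)) * K
        - K * Matrix.diagonal (fun j => ((hY.eigenvalues j ^ (-r) : ℝ) : ℂ)) := by
      rw [hWdef, hrpow_eq hX, hrpow_eq hY, Matrix.mul_sub, Matrix.sub_mul, hconjU, hconjV]
    rw [this, Matrix.sub_apply, Matrix.diagonal_mul, Matrix.mul_diagonal]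
    push_cast
    ring
  have hMentry : ∀ i j, M i j
      = ((hX.eigenvalues i - hY.eigenvalues j : ℝ) : ℂ) * K i j := by
    intro i j
    have : M = Matrix.diagonal (fun i => ((hX.eigenvalues i : ℝ) : ℂ)) * K
        - K * Matrix.diagonal (fun j => ((hY.eigenvalues j : ℝ) : ℂ)) := by
      rw [hMdef]
      conv_lhs => rw [spectral' hX, spectral' hY]
      rw [Matrix.mul_sub, Matrix.sub_mul, hconjU, hconjV]
    rw [this, Matrix.sub_apply, Matrix.diagonal_mul, Matrix.mul_diagonal]
    push_cast
    ring
  have hL : (0:ℝ) ≤ r * c ^ (-r - 1) := by positivity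
  have hfW : fnorm W ≤ (r * c ^ (-r - 1)) * fnorm M := by
    apply fnorm_mono hL
    intro i j
    rw [hWentry i j, hMentry i j, norm_mul, norm_mul, Complex.norm_real, Complex.norm_real,
      Real.norm_eq_abs, Real.norm_eq_abs]
    calc |hX.eigenvalues i ^ (-r) - hY.eigenvalues j ^ (-r)| * ‖K i j‖
        ≤ (r * c ^ (-r - 1) * |hX.eigenvalues i - hY.eigenvalues j|) * ‖K i j‖ :=
          mul_le_mul_of_nonneg_right (scalar_lip hr hc (hXe i) (hYe j)) (norm_nonneg _)
      _ = r * c ^ (-r - 1) * (|hX.eigenvalues i - hY.eigenvalues j| * ‖K i j‖) := by ring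
  have hfW2 : fnorm W = fnorm (hrpow X (-r) - hrpow Y (-r)) := by
    rw [hWdef]
    exact fnorm_conj_unitary (by rw [Matrix.conjTranspose_conjTranspose]; exact hU2) hV2 _
  have hfM2 : fnorm M = fnorm (X - Y) := by
    rw [hMdef]
    exact fnorm_conj_unitary (by rw [Matrix.conjTranspose_conjTranspose]; exact hU2) hV2 _
  rw [← hfW2, ← hfM2]
  exact hfW

end hrpowlem

set_option maxHeartbeats 1000000 in
theorem stmt14 {n : ℕ} (hn : 0 < n) (s t p : ℝ) (hp : 1 ≤ p) (hpt : p ≤ t) (hts : t ≤ s)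
    (A B Q : Matrix (Fin n) (Fin n) ℂ) (hA : IsUnit A) (hB : IsUnit B) (hQ : Q.PosDef)
    (α : ℝ) (hα0 : 0 < α) (hα1 : α ≤ lamMin Q)
    (hα2 : α + α ^ (-(t / s)) * specNorm A ^ 2 + α ^ (-(p / s)) * specNorm B ^ 2 < lamMin Q)
    (β : ℝ) (hβ : β = lamMin (Q - (α ^ (-(t / s))) • (Aᴴ * A) - (α ^ (-(p / s))) • (Bᴴ * B)))
    (hβ2 : t * β ^ (-(t / s)) * specNorm A ^ 2 + p * β ^ (-(p / s)) * specNorm B ^ 2 < s * β)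
    (Ybar : Matrix (Fin n) (Fin n) ℂ) (hYbar : Ybar.PosDef)
    (hYsol : Ybar + Aᴴ * hrpow Ybar (-(t / s)) * A + Bᴴ * hrpow Ybar (-(p / s)) * B = Q)
    (hYlo : lle (α • (1 : Matrix (Fin n) (Fin n) ℂ)) Ybar) (hYhi : lle Ybar Q) :
    ∀ Z : Matrix (Fin n) (Fin n) ℂ, Z.PosDef →
      Z + Aᴴ * hrpow Z (-(t / s)) * A + Bᴴ * hrpow Z (-(p / s)) * B = Q →
      lle Ybar Z → Z = Ybar := by
  intro Z hZ hZsol hYZ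
  have hs0 : (0:ℝ) < s := by linarith
  have hts0 : 0 ≤ t / s := div_nonneg (by linarith) hs0.le
  have hps0 : 0 ≤ p / s := div_nonneg (by linarith) hs0.le
  set αa : ℝ := α ^ (-(t / s)) with hαa
  set αb : ℝ := α ^ (-(p / s)) with hαb
  have hαa0 : 0 ≤ αa := (Real.rpow_pos_of_pos hα0 _).le
  have hαb0 : 0 ≤ αb := (Real.rpow_pos_of_pos hα0 _).le
  set R : Matrix (Fin n) (Fin n) ℂ := Q - αa • (Aᴴ * A) - αb • (Bᴴ * B) with hR
  have hAh : (Aᴴ * A).IsHermitian := (Matrix.posSemidef_conjTranspose_mul_self A).1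
  have hBh : (Bᴴ * B).IsHermitian := (Matrix.posSemidef_conjTranspose_mul_self B).1
  have hRh : R.IsHermitian := (hQ.1.sub (herm_rsmul hAh αa)).sub (herm_rsmul hBh αb)
  have hβR : lle (β • 1) R := by rw [hβ]; exact lamMin_lle hRh hn
  -- β > α > 0
  have hβα : α < β := by
    set γ : ℝ := lamMin Q - αa * specNorm A ^ 2 - αb * specNorm B ^ 2 with hγ
    have h1 : ((αa * specNorm A ^ 2) • (1:Matrix (Fin n) (Fin n) ℂ)
        - αa • (Aᴴ * A)).PosSemidef := by
      have := psd_rsmul (lle_AHA A) hαa0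
      rwa [smul_sub, smul_smul] at this
    have h2 : ((αb * specNorm B ^ 2) • (1:Matrix (Fin n) (Fin n) ℂ)
        - αb • (Bᴴ * B)).PosSemidef := by
      have := psd_rsmul (lle_AHA B) hαb0
      rwa [smul_sub, smul_smul] at this
    have h3 := (lamMin_lle hQ.1 hn)
    have hγR : lle (γ • 1) R := by
      unfold lle
      have hsum := (h3.add h1).add h2
      have hrw : Q - lamMin Q • 1 + ((αa * specNorm A ^ 2) • (1:Matrix (Fin n) (Fin n) ℂ)
          - αa • (Aᴴ * A)) + ((αb * specNorm B ^ 2) • (1:Matrix (Fin n) (Fin n) ℂ)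
          - αb • (Bᴴ * B)) = R - γ • 1 := by
        rw [hγ, sub_smul, sub_smul, hR]
        abel
      rwa [hrw] at hsum
    have hγβ : γ ≤ β := by
      rw [hβ]
      exact lamMin_ge_of_lle hRh hn hγR
    have : α < γ := by rw [hγ]; linarith [hα2]
    linarith
  have hβ0 : (0:ℝ) < β := lt_trans hα0 hβα
  -- eigenvalues of Ybar ≥ α
  have eigYα : ∀ i, α ≤ hYbar.1.eigenvalues i := eig_ge_of_lle hYbar.1 hYlo
  -- Ybar ≥ R ≥ β•1
  have hfa : lle (Aᴴ * hrpow Ybar (-(t / s)) * A) (αa • (Aᴴ * A)) := by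
    have h4 := hrpow_le hYbar.1 hα0 hts0 eigYα
    have h5 := lle_conj h4 A
    have hrw : Aᴴ * (αa • (1:Matrix (Fin n) (Fin n) ℂ)) * A = αa • (Aᴴ * A) := by
      rw [Matrix.mul_smul, Matrix.mul_one, Matrix.smul_mul]
    rwa [hrw] at h5
  have hfb : lle (Bᴴ * hrpow Ybar (-(p / s)) * B) (αb • (Bᴴ * B)) := by
    have h4 := hrpow_le hYbar.1 hα0 hps0 eigYα
    have h5 := lle_conj h4 B
    have hrw : Bᴴ * (αb • (1:Matrix (Fin n) (Fin n) ℂ)) * B = αb • (Bᴴ * B) := by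
      rw [Matrix.mul_smul, Matrix.mul_one, Matrix.smul_mul]
    rwa [hrw] at h5
  have hRY : lle R Ybar := by
    unfold lle
    have hsum := hfa.add hfb
    unfold lle at hsum
    have hrw : αa • (Aᴴ * A) - Aᴴ * hrpow Ybar (-(t / s)) * A
        + (αb • (Bᴴ * B) - Bᴴ * hrpow Ybar (-(p / s)) * B) = Ybar - R := by
      rw [hR, ← hYsol]
      abel
    rwa [hrw] at hsum
  have hYβ : lle (β • 1) Ybar := lle_trans hβR hRY
  have hZβ : lle (β • 1) Z := lle_trans hYβ hYZ
  have eigYβ : ∀ i, β ≤ hYbar.1.eigenvalues i := eig_ge_of_lle hYbar.1 hYβ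
  have eigZβ : ∀ i, β ≤ hZ.1.eigenvalues i := eig_ge_of_lle hZ.1 hZβ
  -- the difference equation
  have key : Z - Ybar = Aᴴ * (hrpow Ybar (-(t / s)) - hrpow Z (-(t / s))) * A
      + Bᴴ * (hrpow Ybar (-(p / s)) - hrpow Z (-(p / s))) * B := by
    have h := hZsol.trans hYsol.symm
    have h2 : Z - Ybar = (Z + Aᴴ * hrpow Z (-(t / s)) * A + Bᴴ * hrpow Z (-(p / s)) * B)
        - (Aᴴ * hrpow Z (-(t / s)) * A + Bᴴ * hrpow Z (-(p / s)) * B) - Ybar := by abel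
    rw [h2, h, Matrix.mul_sub, Matrix.sub_mul, Matrix.mul_sub, Matrix.sub_mul]
    abel
  -- norm estimates
  set d : ℝ := fnorm (Z - Ybar) with hd
  have lipA : fnorm (hrpow Ybar (-(t / s)) - hrpow Z (-(t / s)))
      ≤ (t / s * β ^ (-(t / s) - 1)) * d := by
    have := lip_fnorm hYbar.1 hZ.1 hts0 hβ0 eigYβ eigZβ
    rwa [fnorm_sub_comm Ybar Z] at this
  have lipB : fnorm (hrpow Ybar (-(p / s)) - hrpow Z (-(p / s)))
      ≤ (p / s * β ^ (-(p / s) - 1)) * d := by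
    have := lip_fnorm hYbar.1 hZ.1 hps0 hβ0 eigYβ eigZβ
    rwa [fnorm_sub_comm Ybar Z] at this
  set k : ℝ := specNorm A ^ 2 * (t / s * β ^ (-(t / s) - 1))
      + specNorm B ^ 2 * (p / s * β ^ (-(p / s) - 1)) with hk
  have hdk : d ≤ k * d := by
    calc d = fnorm (Aᴴ * (hrpow Ybar (-(t / s)) - hrpow Z (-(t / s))) * A
        + Bᴴ * (hrpow Ybar (-(p / s)) - hrpow Z (-(p / s))) * B) := by rw [hd, key]
      _ ≤ fnorm (Aᴴ * (hrpow Ybar (-(t / s)) - hrpow Z (-(t / s))) * A)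
          + fnorm (Bᴴ * (hrpow Ybar (-(p / s)) - hrpow Z (-(p / s))) * B) := fnorm_add_le _ _
      _ ≤ specNorm A ^ 2 * fnorm (hrpow Ybar (-(t / s)) - hrpow Z (-(t / s)))
          + specNorm B ^ 2 * fnorm (hrpow Ybar (-(p / s)) - hrpow Z (-(p / s))) :=
          add_le_add (fnorm_conj_le A _) (fnorm_conj_le B _)
      _ ≤ specNorm A ^ 2 * ((t / s * β ^ (-(t / s) - 1)) * d)
          + specNorm B ^ 2 * ((p / s * β ^ (-(p / s) - 1)) * d) := by
          have hA2 : (0:ℝ) ≤ specNorm A ^ 2 := by positivity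
          have hB2 : (0:ℝ) ≤ specNorm B ^ 2 := by positivity
          exact add_le_add (mul_le_mul_of_nonneg_left lipA hA2)
            (mul_le_mul_of_nonneg_left lipB hB2)
      _ = k * d := by rw [hk]; ring
  have hk1 : k < 1 := by
    have hrw : k = (t * β ^ (-(t / s)) * specNorm A ^ 2
        + p * β ^ (-(p / s)) * specNorm B ^ 2) / (s * β) := by
      rw [hk]
      rw [show (-(t / s) - 1 : ℝ) = -(t/s) + (-1) by ring,
          show (-(p / s) - 1 : ℝ) = -(p/s) + (-1) by ring,
          Real.rpow_add hβ0, Real.rpow_add hβ0, Real.rpow_neg_one]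
      field_simp
    rw [hrw]
    exact (div_lt_one (by positivity)).mpr hβ2
  have hd0 : d = 0 := by
    have := fnorm_nonneg (Z - Ybar)
    nlinarith
  rw [hd] at hd0
  have := fnorm_eq_zero hd0
  exact sub_eq_zero.mp this
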